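/- arXiv:2009.10785 — 6 statements merged into one kernel-verified Lean document; each statement's English description precedes it below -/
import Mathlib

section
/- Let D ⊆ ℂ be a domain and suppose there exist p ∈ ℂ and ε > 0 such that the open disc B(p,ε) is disjoint from D. Then for every k ∈ ℤ the weighted Bergman space A²_{w_k}(D), where w_k(z) = (1+|z|²)^{-(k+2)}, is infinite-dimensional over ℂ. (Witnesses are the functions z ↦ (z−p)^{k−m}, m = 0, 1, 2, …, which are holomorphic on D and lie in A²_{w_k}(D).) -/
/-! On `D` we have `‖z - p‖ ≥ ε`, so `1 + ‖z‖²` is at most a constant times `‖z - p‖²`. Hence for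
`n + k ≥ 0` the weighted square of the holomorphic function `(z - p)⁻¹ ^ n` is dominated by a
constant times `(1 + ‖z‖²)⁻²`, which is integrable on `ℂ ≅ ℝ²`. These functions are linearly
independent on `D`: a vanishing linear combination is a polynomial in `(z - p)⁻¹` with infinitely
many roots, because the nonempty open set `D` is infinite. -/

open MeasureTheory

/-- The Bergman space of a set `D ⊆ ℂ` with weight `w`: holomorphic functions on `D`
whose weighted squared modulus has finite integral over `D` w.r.t. Lebesgue measure. -/
def BergmanSet (D : Set ℂ) (w : ℂ → ℝ) : Set (ℂ → ℂ) :=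
  {f | DifferentiableOn ℂ f D ∧ (∫⁻ z in D, ENNReal.ofReal (‖f z‖ ^ 2 * w z)) < ⊤}

/-- The Fubini–Study weight of level `k`: `w_k(z) = (1+|z|²)^(-(k+2))`. -/
noncomputable def fsWeight (k : ℤ) (z : ℂ) : ℝ :=
  (1 + ‖z‖ ^ 2) ^ (-(k + 2))


open Polynomial in
theorem linearIndependent_pow_of_infinite_range {X K : Type*} [Field K] (φ : X → K)
    (hφ : (Set.range φ).Infinite) : LinearIndependent K fun n : ℕ => φ ^ n := by
  let ev : K[X] →ₗ[K] X → K := LinearMap.pi fun x => leval (φ x)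
  have hev : LinearMap.ker ev = ⊥ := by
    refine LinearMap.ker_eq_bot'.2 fun P hP => P.eq_zero_of_infinite_isRoot (hφ.mono ?_)
    rintro _ ⟨x, rfl⟩
    exact congrFun hP x
  have hpow : ev ∘ basisMonomials K = fun n => φ ^ n := by
    ext n x
    simp [ev, coe_basisMonomials]
  simpa only [hpow] using (basisMonomials K).linearIndependent.map' ev hev

theorem one_add_norm_sq_le_mul_norm_sub_sq {E : Type*} [SeminormedAddCommGroup E] {p z : E}
    {ε : ℝ} (hε : 0 < ε) (hz : ε ≤ ‖z - p‖) :
    1 + ‖z‖ ^ 2 ≤ (2 + (1 + 2 * ‖p‖ ^ 2) / ε ^ 2) * ‖z - p‖ ^ 2 := by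
  have hz' : ‖z‖ ≤ ‖z - p‖ + ‖p‖ := norm_le_norm_sub_add z p
  have hratio : 1 ≤ ‖z - p‖ ^ 2 / ε ^ 2 := by
    rw [one_le_div (by positivity)]
    exact pow_le_pow_left₀ hε.le hz 2
  calc 1 + ‖z‖ ^ 2 ≤ 2 * ‖z - p‖ ^ 2 + (1 + 2 * ‖p‖ ^ 2) := by
        nlinarith [norm_nonneg z, sq_nonneg (‖z - p‖ - ‖p‖)]
    _ ≤ 2 * ‖z - p‖ ^ 2 + (1 + 2 * ‖p‖ ^ 2) * (‖z - p‖ ^ 2 / ε ^ 2) :=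
        by gcongr; exact le_mul_of_one_le_right (by positivity) hratio
    _ = _ := by ring

theorem norm_inv_sub_pow_sq_mul_fsWeight_le {p z : ℂ} {ε : ℝ} (hε : 0 < ε)
    (hz : ε ≤ ‖z - p‖) {k : ℤ} {n : ℕ} (hn : 0 ≤ (n : ℤ) + k) :
    ‖(z - p)⁻¹ ^ n‖ ^ 2 * fsWeight k z ≤
      (2 + (1 + 2 * ‖p‖ ^ 2) / ε ^ 2) ^ n * (1 + ‖z‖ ^ 2) ^ (-2 : ℤ) := by
  set C := 2 + (1 + 2 * ‖p‖ ^ 2) / ε ^ 2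
  have ha : 0 < ‖z - p‖ := hε.trans_le hz
  have hs : 1 ≤ 1 + ‖z‖ ^ 2 := le_add_of_nonneg_right (by positivity)
  have hinv : (‖z - p‖ ^ 2)⁻¹ ≤ C * (1 + ‖z‖ ^ 2)⁻¹ := by
    have := one_add_norm_sq_le_mul_norm_sub_sq hε hz
    rw [← div_eq_mul_inv, le_div_iff₀ (by positivity), inv_mul_le_iff₀ (by positivity)]
    rwa [mul_comm]
  calc ‖(z - p)⁻¹ ^ n‖ ^ 2 * fsWeight k z
      = ((‖z - p‖ ^ 2)⁻¹) ^ n * (1 + ‖z‖ ^ 2) ^ (-(k + 2)) := by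
        rw [fsWeight, norm_pow, norm_inv]; ring
    _ ≤ (C * (1 + ‖z‖ ^ 2)⁻¹) ^ n * (1 + ‖z‖ ^ 2) ^ (-(k + 2)) := by gcongr
    _ = C ^ n * (1 + ‖z‖ ^ 2) ^ (-((n : ℤ) + k) - 2) := by
        rw [mul_pow, mul_assoc, ← zpow_natCast, ← zpow_natCast, inv_zpow',
          ← zpow_add₀ (by positivity)]
        ring_nf
    _ ≤ C ^ n * (1 + ‖z‖ ^ 2) ^ (-2 : ℤ) :=
        mul_le_mul_of_nonneg_left (zpow_le_zpow_right₀ hs (by omega)) (by positivity)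

theorem integrable_one_add_norm_sq_zpow_neg_two :
    Integrable fun z : ℂ => (1 + ‖z‖ ^ 2) ^ (-2 : ℤ) := by
  have h := integrable_rpow_neg_one_add_norm_sq (E := ℂ) (μ := volume) (r := 4)
    (by rw [Complex.finrank_real_complex]; norm_num)
  refine h.congr (Filter.Eventually.of_forall fun z => ?_)
  dsimp only
  rw [show (-4 : ℝ) / 2 = ((-2 : ℤ) : ℝ) by norm_num, Real.rpow_intCast]

theorem inv_sub_pow_mem_bergmanSet {D : Set ℂ} {p : ℂ} {ε : ℝ} (hε : 0 < ε)
    (hD : ∀ z ∈ D, ε ≤ ‖z - p‖) {k : ℤ} {n : ℕ} (hn : 0 ≤ (n : ℤ) + k) :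
    (fun z : ℂ => (z - p)⁻¹ ^ n) ∈ BergmanSet D (fsWeight k) := by
  refine ⟨fun z hz => ?_, ?_⟩
  · have hzp : z - p ≠ 0 := norm_pos_iff.1 (hε.trans_le (hD z hz))
    exact (((differentiableAt_id.sub_const p).inv hzp).pow n).differentiableWithinAt
  · calc ∫⁻ z in D, ENNReal.ofReal (‖(z - p)⁻¹ ^ n‖ ^ 2 * fsWeight k z)
        ≤ ∫⁻ z in D, ENNReal.ofReal
            ((2 + (1 + 2 * ‖p‖ ^ 2) / ε ^ 2) ^ n * (1 + ‖z‖ ^ 2) ^ (-2 : ℤ)) :=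
          setLIntegral_mono (by fun_prop) fun z hz =>
            ENNReal.ofReal_le_ofReal (norm_inv_sub_pow_sq_mul_fsWeight_le hε (hD z hz) hn)
      _ < ⊤ :=
          (integrable_one_add_norm_sq_zpow_neg_two.const_mul _).integrableOn.setLIntegral_lt_top

/-- If the complement of the domain `D ⊆ ℂ` contains an open disc `B(p,ε)`, then for
every `k ∈ ℤ` the weighted Bergman space `A²_{w_k}(D)` is infinite dimensional over `ℂ`. -/
theorem bergman_infinite_of_complement_has_interior (D : Set ℂ) (hDopen : IsOpen D)
    (hDconn : IsConnected D) (p : ℂ) (ε : ℝ) (hε : 0 < ε)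
    (hdisj : Metric.ball p ε ∩ D = ∅) (k : ℤ) :
    ¬ FiniteDimensional ℂ
      (Submodule.span ℂ (D.restrict '' BergmanSet D (fsWeight k)) : Submodule ℂ (D → ℂ)) := by
  have hD : ∀ z ∈ D, ε ≤ ‖z - p‖ := fun z hz => by
    by_contra! h
    exact hdisj.subset ⟨by rwa [Metric.mem_ball, dist_eq_norm], hz⟩
  obtain ⟨z₀, hz₀⟩ := hDconn.nonempty
  have : Infinite D := (infinite_of_mem_nhds z₀ (hDopen.mem_nhds hz₀)).to_subtype
  let φ : D → ℂ := fun z => ((z : ℂ) - p)⁻¹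
  have hφ : (Set.range φ).Infinite := Set.infinite_range_of_injective <|
    inv_injective.comp (sub_left_injective.comp Subtype.val_injective)
  set N := Submodule.span ℂ (D.restrict '' BergmanSet D (fsWeight k))
  have hmem (n : ℕ) : φ ^ (n + k.natAbs) ∈ N :=
    Submodule.subset_span
      ⟨_, inv_sub_pow_mem_bergmanSet hε hD (n := n + k.natAbs) (by omega), rfl⟩
  have hli : LinearIndependent ℂ fun n : ℕ => (⟨_, hmem n⟩ : N) :=
    LinearIndependent.of_comp N.subtype
      ((linearIndependent_pow_of_infinite_range φ hφ).comp _ (add_left_injective _))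
  intro hfin
  exact Module.Finite.not_linearIndependent_of_infinite _ hli
end

section
/- Let D ⊆ ℂ be a domain and k ∈ ℤ, and set w_k(z) = (1+|z|²)^{-(k+2)}. Suppose there exists a bounded holomorphic function g on D that is not constant, and suppose there exists f ∈ A²_{w_k}(D) that is not the restriction to D of a complex polynomial of degree at most k. Then A²_{w_k}(D) is infinite-dimensional over ℂ. -/
open MeasureTheory

/-! If `f ≠ 0` lies in the weighted Bergman space and `g` is bounded and holomorphic, then so
does every `f gⁿ`. These are linearly independent: a relation `f · P(g) = 0` on the domain forces
`P(g) ≡ 0` by the identity theorem, so `g` takes values in the finite zero set of `P` and, the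
domain being connected, is constant unless `P = 0`. -/

open Polynomial Set

theorem AnalyticOnNhd.eqOn_zero_of_smul_eqOn_zero {𝕜 E F : Type*} [NontriviallyNormedField 𝕜]
    [NormedAddCommGroup E] [NormedSpace 𝕜 E] [NormedAddCommGroup F] [NormedSpace 𝕜 F]
    {f : E → 𝕜} {h : E → F} {U : Set E} (hh : AnalyticOnNhd 𝕜 h U) (hU : IsPreconnected U)
    (hUo : IsOpen U) {z₀ : E} (hz₀ : z₀ ∈ U) (hf : ContinuousAt f z₀) (hfz₀ : f z₀ ≠ 0)
    (hfh : ∀ z ∈ U, f z • h z = 0) : EqOn h 0 U := by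
  refine hh.eqOn_zero_of_preconnected_of_eventuallyEq_zero hU hz₀ ?_
  filter_upwards [hUo.mem_nhds hz₀, hf.eventually_ne hfz₀] with z hzU hfz
  exact (smul_eq_zero.1 (hfh z hzU)).resolve_left hfz

theorem IsPreconnected.constant_of_eval_comp_eq_zero {X R : Type*} [TopologicalSpace X] [CommRing R]
    [IsDomain R] [TopologicalSpace R] [T1Space R] {S : Set X} (hS : IsPreconnected S)
    {g : X → R} (hg : ContinuousOn g S) {P : R[X]} (hP : P ≠ 0)
    (hPg : ∀ x ∈ S, P.eval (g x) = 0) {x y : X} (hx : x ∈ S) (hy : y ∈ S) : g x = g y :=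
  hS.constant_of_mapsTo (finite_setOfPred_isRoot hP).isDiscrete hg hPg hx hy

theorem linearIndependent_mul_pow {ι R : Type*} [CommRing R] {f g : ι → R}
    (h : ∀ P : R[X], (∀ i, f i * P.eval (g i) = 0) → P = 0) :
    LinearIndependent R (fun n i => f i * g i ^ n) := by
  let Φ : R[X] →ₗ[R] ι → R := LinearMap.pi fun i => f i • leval (g i)
  have hΦ : LinearMap.ker Φ = ⊥ := LinearMap.ker_eq_bot'.2 fun P hP => h P (congrFun hP)
  have hmonomials : LinearIndependent R fun n : ℕ => (X ^ n : R[X]) := by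
    simpa [coe_basisMonomials, ← X_pow_eq_monomial] using (basisMonomials R).linearIndependent
  have hΦX : (fun n i => f i * g i ^ n) = Φ ∘ fun n => X ^ n := by
    funext n i
    simp [Φ]
  exact hΦX ▸ hmonomials.map' Φ hΦ

theorem Submodule.not_finiteDimensional_of_linearIndependent {K V ι : Type*} [DivisionRing K]
    [AddCommGroup V] [Module K V] [Infinite ι] {p : Submodule K V} {v : ι → V}
    (hv : LinearIndependent K v) (hvp : ∀ i, v i ∈ p) : ¬ FiniteDimensional K p := fun _ =>
  Module.Finite.not_linearIndependent_of_infinite _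
    (hv.of_comp p.subtype : LinearIndependent K fun i => (⟨v i, hvp i⟩ : p))

theorem mul_mem_bergmanSet {D : Set ℂ} (hD : MeasurableSet D) {w : ℂ → ℝ} {f u : ℂ → ℂ}
    (hf : f ∈ BergmanSet D w) (hu : DifferentiableOn ℂ u D) {C : ℝ}
    (hC : ∀ z ∈ D, ‖u z‖ ≤ C) : (fun z => f z * u z) ∈ BergmanSet D w := by
  refine ⟨hf.1.mul hu, ?_⟩
  have hpt : ∀ z ∈ D, ENNReal.ofReal (‖f z * u z‖ ^ 2 * w z)
      ≤ ENNReal.ofReal (C ^ 2) * ENNReal.ofReal (‖f z‖ ^ 2 * w z) := by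
    intro z hz
    rw [← ENNReal.ofReal_mul (sq_nonneg C)]
    rcases le_or_gt 0 (w z) with hw | hw
    · have hfu : ‖f z * u z‖ ^ 2 ≤ C ^ 2 * ‖f z‖ ^ 2 := by
        rw [norm_mul, mul_pow, mul_comm]
        gcongr
        exact hC z hz
      rw [← mul_assoc]
      exact ENNReal.ofReal_le_ofReal (mul_le_mul_of_nonneg_right hfu hw)
    · rw [ENNReal.ofReal_of_nonpos (mul_nonpos_of_nonneg_of_nonpos (sq_nonneg _) hw.le)]
      exact zero_le
  calc ∫⁻ z in D, ENNReal.ofReal (‖f z * u z‖ ^ 2 * w z)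
      ≤ ∫⁻ z in D, ENNReal.ofReal (C ^ 2) * ENNReal.ofReal (‖f z‖ ^ 2 * w z) :=
        setLIntegral_mono' hD hpt
    _ = ENNReal.ofReal (C ^ 2) * ∫⁻ z in D, ENNReal.ofReal (‖f z‖ ^ 2 * w z) :=
        lintegral_const_mul' _ _ ENNReal.ofReal_ne_top
    _ < ⊤ := ENNReal.mul_lt_top ENNReal.ofReal_lt_top hf.2

theorem eq_zero_of_forall_mul_eval_comp_eq_zero {D : Set ℂ} (hDo : IsOpen D)
    (hDc : IsPreconnected D) {f g : ℂ → ℂ} (hf : DifferentiableOn ℂ f D)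
    (hg : DifferentiableOn ℂ g D) {z₀ : ℂ} (hz₀ : z₀ ∈ D) (hfz₀ : f z₀ ≠ 0)
    (hg₀ : ∃ z ∈ D, g z ≠ g z₀) {P : ℂ[X]}
    (hP : ∀ z ∈ D, f z * P.eval (g z) = 0) : P = 0 := by
  by_contra hP₀
  obtain ⟨z, hz, hgz⟩ := hg₀
  have hPg : EqOn (fun z => P.eval (g z)) 0 D :=
    ((P.differentiable.comp_differentiableOn hg).analyticOnNhd hDo).eqOn_zero_of_smul_eqOn_zero
      hDc hDo hz₀ (hf.continuousOn.continuousAt (hDo.mem_nhds hz₀)) hfz₀ hP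
  exact hgz (hDc.constant_of_eval_comp_eq_zero hg.continuousOn hP₀ hPg hz hz₀)

/-- If `H^∞(D)` is nontrivial (there is a bounded nonconstant holomorphic function `g`
on `D`) and `A²_{w_k}(D)` contains an element `f` that is not the restriction to `D`
of a polynomial of degree at most `k`, then `A²_{w_k}(D)` is infinite dimensional. -/
theorem bergman_infinite_of_bounded_nonconstant (D : Set ℂ) (hDopen : IsOpen D)
    (hDconn : IsConnected D) (k : ℤ)
    (g : ℂ → ℂ) (hg : DifferentiableOn ℂ g D) (hgbdd : ∃ C : ℝ, ∀ z ∈ D, ‖g z‖ ≤ C)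
    (hgnc : ¬ ∃ c : ℂ, ∀ z ∈ D, g z = c)
    (f : ℂ → ℂ) (hf : f ∈ BergmanSet D (fsWeight k))
    (hfnp : ¬ ∃ P : Polynomial ℂ, (∀ n : ℕ, k < (n : ℤ) → P.coeff n = 0) ∧
      ∀ z ∈ D, f z = P.eval z) :
    ¬ FiniteDimensional ℂ
      (Submodule.span ℂ (D.restrict '' BergmanSet D (fsWeight k)) : Submodule ℂ (D → ℂ)) := by
  obtain ⟨C, hC⟩ := hgbdd
  obtain ⟨z₀, hz₀, hfz₀⟩ : ∃ z₀ ∈ D, f z₀ ≠ 0 := by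
    by_contra! h
    exact hfnp ⟨0, fun _ _ => coeff_zero _, fun z hz => by simp [h z hz]⟩
  have hg₀ : ∃ z ∈ D, g z ≠ g z₀ := by
    by_contra! h
    exact hgnc ⟨g z₀, h⟩
  have hli : LinearIndependent ℂ fun n (z : D) => f z * g z ^ n :=
    linearIndependent_mul_pow fun P hP => eq_zero_of_forall_mul_eval_comp_eq_zero hDopen
      hDconn.isPreconnected hf.1 hg hz₀ hfz₀ hg₀ fun z hz => hP ⟨z, hz⟩
  have hmem (n : ℕ) : (fun z => f z * g z ^ n) ∈ BergmanSet D (fsWeight k) := by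
    refine mul_mem_bergmanSet hDopen.measurableSet hf (hg.pow n) (C := C ^ n) fun z hz => ?_
    rw [norm_pow]
    exact pow_le_pow_left₀ (norm_nonneg _) (hC z hz) n
  exact Submodule.not_finiteDimensional_of_linearIndependent hli fun n =>
    Submodule.subset_span ⟨_, hmem n, rfl⟩
end

section
/- Let D ⊆ ℂ be a domain and let f be holomorphic on D such that f is not the restriction to D of a rational function. Let z₀ ∈ D, let N be a positive integer, and let z₁, …, z_N ∈ D \ {z₀} be pairwise distinct points. For j = 1, …, N define g_j on D by g_j(z) = (f(z) − f(z_j))·(z − z₀)/(z − z_j) for z ≠ z_j, extended holomorphically across the removable singularity at z_j (with value f′(z_j)(z_j − z₀) there). Then g₁, …, g_N are linearly independent over ℂ. -/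
/-!
Multiplying a relation `∑ c_j g_j = 0` on `D` by `∏_k (z - z_k) / (z - z₀)` turns it into
`f q = p` on `D` (first off the finite set `{z₀, z_k}`, then everywhere by continuity), where
`q = ∑ c_j ∏_{k ≠ j} (X - z_k)` and `p = ∑ c_j f(z_j) ∏_{k ≠ j} (X - z_k)`. Since
`q(z_i) = c_i ∏_{k ≠ i} (z_i - z_k)`, `q ≠ 0` unless `c = 0`. Every root `a ∈ D` of `q` is
then a root of `p`, and dividing both by `X - a` keeps `f q = p` on `D` (by continuity at
`a`); once `q` has no roots left in `D`, `f = p / q` there.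
-/

/-- `f` is the restriction to `D` of a rational function: there are polynomials `p, q`
with `q` nonvanishing on `D` and `f = p/q` on `D`. -/
def IsRationalRestriction (D : Set ℂ) (f : ℂ → ℂ) : Prop :=
  ∃ p q : Polynomial ℂ, (∀ z ∈ D, q.eval z ≠ 0) ∧ ∀ z ∈ D, f z = p.eval z / q.eval z

open Filter Topology Polynomial Finset

theorem Set.EqOn.of_eqOn_diff_finite {X Y : Type*} [TopologicalSpace X] [T1Space X]
    [∀ x : X, NeBot (𝓝[≠] x)] [TopologicalSpace Y] [T2Space Y] {D S : Set X} {f g : X → Y}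
    (hD : IsOpen D) (hS : S.Finite) (hf : ContinuousOn f D) (hg : ContinuousOn g D)
    (h : Set.EqOn f g (D \ S)) : Set.EqOn f g D :=
  h.of_subset_closure hf hg Set.sdiff_subset <| by
    simpa [Set.sdiff_eq] using (dense_univ.sdiff_finite hS).open_subset_closure_inter hD

theorem isRationalRestriction_of_mul_eq {D : Set ℂ} (hD : IsOpen D) {f : ℂ → ℂ}
    (hf : ContinuousOn f D) {p q : ℂ[X]} (hq : q ≠ 0)
    (h : ∀ z ∈ D, f z * q.eval z = p.eval z) : IsRationalRestriction D f := by
  induction hn : q.natDegree using Nat.strong_induction_on generalizing p q with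
  | _ n ih =>
  by_cases hroot : ∃ a ∈ D, q.IsRoot a
  · obtain ⟨a, haD, ha⟩ := hroot
    have hpa : p.IsRoot a := by rw [IsRoot, ← h a haD, ha.eq_zero, mul_zero]
    obtain ⟨q₁, rfl⟩ := dvd_iff_isRoot.mpr ha
    obtain ⟨p₁, rfl⟩ := dvd_iff_isRoot.mpr hpa
    have hq₁ : q₁ ≠ 0 := right_ne_zero_of_mul hq
    have hdeg : q₁.natDegree < n := by
      rw [← hn, natDegree_mul (X_sub_C_ne_zero a) hq₁, natDegree_X_sub_C]; omega
    have hcancel : Set.EqOn (fun z => f z * q₁.eval z) p₁.eval (D \ {a}) := by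
      rintro z ⟨hz, hza⟩
      have hza : z - a ≠ 0 := sub_ne_zero.mpr hza
      have := h z hz
      simp only [eval_mul, eval_sub, eval_X, eval_C] at this
      exact mul_left_cancel₀ hza (by linear_combination this)
    have hcont : ContinuousOn (fun z => f z * q₁.eval z) D := hf.mul q₁.continuousOn
    exact ih _ hdeg hq₁ (hcancel.of_eqOn_diff_finite hD (Set.finite_singleton a) hcont
      p₁.continuousOn) rfl
  · push Not at hroot
    exact ⟨p, q, hroot, fun z hz => (eq_div_iff (hroot z hz)).mpr (h z hz)⟩

section NodalSum

variable {R ι : Type*} [CommRing R] [Fintype ι] [DecidableEq ι]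

noncomputable def nodalSum (v c : ι → R) : R[X] :=
  ∑ j, C (c j) * Lagrange.nodal (univ.erase j) v

theorem eval_nodalSum (v c : ι → R) (x : R) :
    (nodalSum v c).eval x = ∑ j, c j * ∏ k ∈ univ.erase j, (x - v k) := by
  simp [nodalSum, eval_finsetSum, Lagrange.eval_nodal]

theorem eval_nodalSum_node (v c : ι → R) (i : ι) :
    (nodalSum v c).eval (v i) = c i * ∏ k ∈ univ.erase i, (v i - v k) := by
  rw [eval_nodalSum, sum_eq_single i (fun j _ hji => ?_) (by simp)]
  exact mul_eq_zero_of_right _ (prod_eq_zero (mem_erase.mpr ⟨hji.symm, mem_univ i⟩) (sub_self _))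

theorem nodalSum_ne_zero [IsDomain R] {v : ι → R} (hv : Function.Injective v) {c : ι → R}
    (hc : c ≠ 0) : nodalSum v c ≠ 0 := by
  obtain ⟨i, hi⟩ := Function.ne_iff.mp hc
  intro h
  have := eval_nodalSum_node v c i
  rw [h, eval_zero] at this
  refine mul_ne_zero (by simpa using hi) (prod_ne_zero_iff.mpr fun k hk => ?_) this.symm
  exact sub_ne_zero.mpr fun hik => (mem_erase.mp hk).1 (hv hik).symm

end NodalSum

theorem mul_eval_nodalSum_eq {ι : Type*} [Fintype ι] [DecidableEq ι] {D : Set ℂ}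
    (hD : IsOpen D) {f : ℂ → ℂ} (hf : ContinuousOn f D) {z₀ : ℂ} {zs : ι → ℂ}
    {g : ι → ℂ → ℂ}
    (hgeq : ∀ j, ∀ z ∈ D, z ≠ zs j → g j z = (f z - f (zs j)) * (z - z₀) / (z - zs j))
    {c : ι → ℂ} (hrel : ∀ z ∈ D, ∑ j, c j * g j z = 0) :
    ∀ z ∈ D, f z * (nodalSum zs c).eval z = (nodalSum zs fun j => c j * f (zs j)).eval z := by
  have hoff : Set.EqOn (fun z => f z * (nodalSum zs c).eval z)
      (nodalSum zs fun j => c j * f (zs j)).eval (D \ insert z₀ (Set.range zs)) := by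
    rintro z ⟨hz, hzS⟩
    simp only [Set.mem_insert_iff, Set.mem_range, not_or, not_exists] at hzS
    have hz₀ : z - z₀ ≠ 0 := sub_ne_zero.mpr hzS.1
    have hterm : ∀ j, (z - z₀) * ((f z - f (zs j)) * ∏ k ∈ univ.erase j, (z - zs k)) =
        (∏ k, (z - zs k)) * g j z := fun j => by
      have hzj : z - zs j ≠ 0 := sub_ne_zero.mpr fun h => hzS.2 j h.symm
      rw [hgeq j z hz (sub_ne_zero.mp hzj), ← mul_prod_erase univ _ (mem_univ j)]
      field_simp
    refine mul_left_cancel₀ hz₀ (sub_eq_zero.mp ?_)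
    calc (z - z₀) * (f z * (nodalSum zs c).eval z) -
          (z - z₀) * (nodalSum zs fun j => c j * f (zs j)).eval z
        = ∑ j, c j * ((z - z₀) * ((f z - f (zs j)) * ∏ k ∈ univ.erase j, (z - zs k))) := by
          simp only [eval_nodalSum, mul_sum, ← sum_sub_distrib]
          exact sum_congr rfl fun j _ => by ring
      _ = (∏ k, (z - zs k)) * ∑ j, c j * g j z := by
          simp only [hterm, mul_sum]
          exact sum_congr rfl fun j _ => by ring
      _ = 0 := by rw [hrel z hz, mul_zero]
  exact hoff.of_eqOn_diff_finite hD ((Set.finite_range zs).insert z₀)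
    (hf.mul (nodalSum zs c).continuousOn) (nodalSum _ _).continuousOn

theorem gj_linearIndependent_general (D : Set ℂ) (hDopen : IsOpen D)
    (f : ℂ → ℂ) (hf : DifferentiableOn ℂ f D) (hfrat : ¬ IsRationalRestriction D f)
    (z₀ : ℂ) (N : ℕ) (zs : Fin N → ℂ) (hinj : Function.Injective zs) (g : Fin N → ℂ → ℂ)
    (hgeq : ∀ j, ∀ z ∈ D, z ≠ zs j → g j z = (f z - f (zs j)) * (z - z₀) / (z - zs j)) :
    LinearIndependent ℂ (fun j : Fin N => D.restrict (g j)) := by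
  rw [Fintype.linearIndependent_iff]
  intro c hc
  suffices c = 0 from fun i => congrFun this i
  by_contra hc₀
  have hrel : ∀ z ∈ D, ∑ j, c j * g j z = 0 := fun z hz => by
    have := congrFun hc ⟨z, hz⟩
    simp only [Finset.sum_apply, Pi.smul_apply, smul_eq_mul, Pi.zero_apply] at this
    exact this
  exact hfrat <| isRationalRestriction_of_mul_eq hDopen hf.continuousOn
    (nodalSum_ne_zero hinj hc₀) (mul_eval_nodalSum_eq hDopen hf.continuousOn hgeq hrel)

/-- Claim 2 in the proof of the main theorem: if `f` is holomorphic on the domain `D`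
and not the restriction of a rational function, `z₀ ∈ D`, and `z₁, …, z_N ∈ D \ {z₀}`
are pairwise distinct, then the functions
`g_j(z) = (f(z) − f(z_j))(z − z₀)/(z − z_j)` (extended holomorphically across the
removable singularity at `z_j`, with value `f′(z_j)(z_j − z₀)` there) are linearly
independent over `ℂ` as functions on `D`. -/
theorem gj_linearIndependent (D : Set ℂ) (hDopen : IsOpen D) (hDconn : IsConnected D)
    (f : ℂ → ℂ) (hf : DifferentiableOn ℂ f D) (hfrat : ¬ IsRationalRestriction D f)
    (z₀ : ℂ) (hz₀ : z₀ ∈ D) (N : ℕ) (hN : 0 < N)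
    (zs : Fin N → ℂ) (hzsD : ∀ j, zs j ∈ D) (hzs₀ : ∀ j, zs j ≠ z₀)
    (hinj : Function.Injective zs)
    (g : Fin N → ℂ → ℂ) (hg : ∀ j, DifferentiableOn ℂ (g j) D)
    (hgeq : ∀ j, ∀ z ∈ D, z ≠ zs j → g j z = (f z - f (zs j)) * (z - z₀) / (z - zs j))
    (hgval : ∀ j, g j (zs j) = deriv f (zs j) * (zs j - z₀)) :
    LinearIndependent ℂ (fun j : Fin N => D.restrict (g j)) :=
  gj_linearIndependent_general D hDopen f hf hfrat z₀ N zs hinj g hgeq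
end

section
/- Let D ⊆ ℂ be a domain and let f be holomorphic on D such that f is not the restriction to D of a rational function. Let z₀ ∈ D, let N be a positive integer, let z₁, …, z_N ∈ D \ {z₀} be pairwise distinct, and define g_j on D by g_j(z) = (f(z) − f(z_j))·(z − z₀)/(z − z_j) (extended across the removable singularity at z_j). If λ = (λ₁, …, λ_N) ∈ ℂᴺ is such that the function g_λ = Σ_{j=1}^N λ_j g_j is the restriction to D of a rational function, then λ = 0. -/
open Polynomial Lagrange Finset

lemma Set.EqOn.of_diff_countable {𝕜 Y : Type*} [NontriviallyNormedField 𝕜] [CompleteSpace 𝕜]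
    [TopologicalSpace Y] [T2Space Y] {D S : Set 𝕜} {u v : 𝕜 → Y} (hD : IsOpen D)
    (hS : S.Countable) (hu : ContinuousOn u D) (hv : ContinuousOn v D) (h : EqOn u v (D \ S)) :
    EqOn u v D :=
  h.of_subset_closure hu hv Set.sdiff_subset ((hS.dense_compl 𝕜).open_subset_closure_inter hD)

section NodalPartialFractions

variable {F ι : Type*} [Field F] [Fintype ι] [DecidableEq ι]

lemma eval_sum_C_mul_nodal_erase {c v : ι → F} {z : F} (hz : ∀ j, z ≠ v j) :
    (∑ j, C (c j) * nodal (univ.erase j) v).eval z =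
      (∑ j, c j / (z - v j)) * (nodal univ v).eval z := by
  rw [eval_finsetSum, sum_mul]
  refine sum_congr rfl fun j _ => ?_
  rw [nodal_eq_mul_nodal_erase (mem_univ j), eval_mul, eval_mul, eval_C, eval_sub, eval_X,
    eval_C]
  field_simp [sub_ne_zero.2 (hz j)]

lemma sum_C_mul_nodal_erase_ne_zero {c v : ι → F} (hv : Function.Injective v) (hc : c ≠ 0) :
    ∑ j, C (c j) * nodal (univ.erase j) v ≠ 0 := by
  obtain ⟨i, hi⟩ := Function.ne_iff.1 hc
  intro h
  have hvanish : ∀ j ≠ i, (C (c j) * nodal (univ.erase j) v).eval (v i) = 0 := fun j hj => by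
    rw [eval_mul, eval_nodal_at_node (mem_erase.2 ⟨hj.symm, mem_univ i⟩), mul_zero]
  have := congrArg (eval (v i)) h
  rw [eval_finsetSum, sum_eq_single i (fun j _ => hvanish j) (by simp), eval_mul, eval_C,
    eval_zero] at this
  exact hi ((mul_eq_zero.1 this).resolve_right
    (eval_nodal_not_at_node fun j hj => hv.ne (mem_erase.1 hj).1.symm))

end NodalPartialFractions

namespace IsRationalRestriction

variable {D : Set ℂ} {f : ℂ → ℂ} {P Q : ℂ[X]}

lemma of_isCoprime (hPQ : IsCoprime P Q) (h : ∀ z ∈ D, f z * Q.eval z = P.eval z) :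
    IsRationalRestriction D f := by
  have hQ : ∀ z ∈ D, Q.eval z ≠ 0 := by
    intro z hz hQz
    obtain ⟨a, b, hab⟩ := hPQ
    have := congrArg (eval z) hab
    simp [← h z hz, hQz] at this
  exact ⟨P, Q, hQ, fun z hz => (eq_div_iff (hQ z hz)).2 (h z hz)⟩

lemma of_mul_eval_eq_off_countable (hD : IsOpen D) (hf : ContinuousOn f D) (hQ : Q ≠ 0)
    {S : Set ℂ} (hS : S.Countable) (h : ∀ z ∈ D \ S, f z * Q.eval z = P.eval z) :
    IsRationalRestriction D f := by
  obtain ⟨P₁, Q₁, G, hrel, rfl, rfl⟩ := UniqueFactorizationMonoid.exists_reduced_factors' P Q hQ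
  have hG : G ≠ 0 := left_ne_zero_of_mul hQ
  have hS' : (S ∪ G.rootSet ℂ).Countable := hS.union (G.rootSet_finite ℂ).countable
  refine of_isCoprime hrel.isCoprime fun z hz => ?_
  refine Set.EqOn.of_diff_countable hD hS' (hf.mul Q₁.continuous.continuousOn)
    P₁.continuous.continuousOn (fun w ⟨hwD, hwS⟩ => ?_) hz
  have hGw : G.eval w ≠ 0 := fun hGw => hwS (Or.inr ((mem_rootSet_of_ne hG).2 hGw))
  have hw := h w ⟨hwD, fun hw => hwS (Or.inl hw)⟩
  rw [eval_mul, eval_mul] at hw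
  exact mul_left_cancel₀ hGw (by simp only [Pi.mul_apply]; linear_combination hw)

end IsRationalRestriction

theorem glambda_rational_implies_zero_general (D : Set ℂ) (hDopen : IsOpen D)
    (f : ℂ → ℂ) (hf : DifferentiableOn ℂ f D) (hfrat : ¬ IsRationalRestriction D f)
    (z₀ : ℂ) (hz₀ : z₀ ∈ D) (N : ℕ)
    (zs : Fin N → ℂ)
    (hinj : Function.Injective zs)
    (g : Fin N → ℂ → ℂ)
    (hgeq : ∀ j, ∀ z ∈ D, z ≠ zs j → g j z = (f z - f (zs j)) * (z - z₀) / (z - zs j))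
    (lam : Fin N → ℂ)
    (hrat : IsRationalRestriction D (fun z => ∑ j : Fin N, lam j * g j z)) :
    lam = 0 := by
  by_contra hlam
  obtain ⟨p, q, hq, hpq⟩ := hrat
  have hq0 : q ≠ 0 := by rintro rfl; exact hq z₀ hz₀ eval_zero
  set S := ∑ j, C (lam j) * nodal (univ.erase j) zs
  set T := ∑ j, C (lam j * f (zs j)) * nodal (univ.erase j) zs
  refine hfrat <| .of_mul_eval_eq_off_countable (Q := (X - C z₀) * S * q)
    (P := p * nodal univ zs + (X - C z₀) * T * q) hDopen hf.continuousOn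
    (mul_ne_zero (mul_ne_zero (X_sub_C_ne_zero z₀) (sum_C_mul_nodal_erase_ne_zero hinj hlam)) hq0)
    (Set.countable_range zs) ?_
  rintro z ⟨hzD, hz⟩
  have hzs : ∀ j, z ≠ zs j := fun j hj => hz ⟨j, hj.symm⟩
  have hg_sum : ∑ j, lam j * g j z =
      (z - z₀) * (f z * ∑ j, lam j / (z - zs j) - ∑ j, lam j * f (zs j) / (z - zs j)) := by
    rw [mul_sum, ← sum_sub_distrib, mul_sum]
    refine sum_congr rfl fun j _ => ?_
    rw [hgeq j z hzD (hzs j)]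
    ring
  have hpq : ∑ j, lam j * g j z = p.eval z / q.eval z := hpq z hzD
  rw [hg_sum, eq_div_iff (hq z hzD)] at hpq
  have hS : S.eval z = (∑ j, lam j / (z - zs j)) * (nodal univ zs).eval z :=
    eval_sum_C_mul_nodal_erase hzs
  have hT : T.eval z = (∑ j, lam j * f (zs j) / (z - zs j)) * (nodal univ zs).eval z :=
    eval_sum_C_mul_nodal_erase hzs
  simp only [eval_mul, eval_add, eval_sub, eval_X, eval_C, hS, hT]
  linear_combination (nodal univ zs).eval z * hpq

/-- Strengthened Claim 2 (used in Case III of the main theorem): with `f` holomorphic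
on the domain `D`, not the restriction of a rational function, `z₀ ∈ D`,
`z₁, …, z_N ∈ D \ {z₀}` pairwise distinct, and
`g_j(z) = (f(z) − f(z_j))(z − z₀)/(z − z_j)` (extended across the removable
singularity at `z_j`): if `g_λ = Σ λ_j g_j` is the restriction to `D` of a rational
function, then `λ = 0`. -/
theorem glambda_rational_implies_zero (D : Set ℂ) (hDopen : IsOpen D)
    (hDconn : IsConnected D)
    (f : ℂ → ℂ) (hf : DifferentiableOn ℂ f D) (hfrat : ¬ IsRationalRestriction D f)
    (z₀ : ℂ) (hz₀ : z₀ ∈ D) (N : ℕ) (hN : 0 < N)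
    (zs : Fin N → ℂ) (hzsD : ∀ j, zs j ∈ D) (hzs₀ : ∀ j, zs j ≠ z₀)
    (hinj : Function.Injective zs)
    (g : Fin N → ℂ → ℂ) (hg : ∀ j, DifferentiableOn ℂ (g j) D)
    (hgeq : ∀ j, ∀ z ∈ D, z ≠ zs j → g j z = (f z - f (zs j)) * (z - z₀) / (z - zs j))
    (lam : Fin N → ℂ)
    (hrat : IsRationalRestriction D (fun z => ∑ j : Fin N, lam j * g j z)) :
    lam = 0 :=
  glambda_rational_implies_zero_general D hDopen f hf hfrat z₀ hz₀ N zs hinj g hgeq lam hrat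
end

section
/- Let D ⊆ ℂ be a domain, z₀ ∈ D, and let f be holomorphic on D, not the restriction to D of a rational function, and vanishing at z₀ to order exactly l ≥ 0 (i.e., f(z) = (z−z₀)^l h(z) near z₀ with h holomorphic and h(z₀) ≠ 0; the order is finite since f ≢ 0). Let N > l be a positive integer and z₁, …, z_N ∈ D \ {z₀} pairwise distinct, and define g_j on D by g_j(z) = (f(z) − f(z_j))·(z − z₀)/(z − z_j) (extended across the removable singularity at z_j). Then there exists λ = (λ₁, …, λ_N) ∈ ℂᴺ with λ ≠ 0 such that g_λ = Σ_{j=1}^N λ_j g_j vanishes at z₀ to order at least l + 1. -/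
open Matrix in
theorem Matrix.exists_mulVec_eq_zero_of_card_lt {K m n : Type*} [Field K] [Fintype m]
    [Fintype n] (A : Matrix m n K) (h : Fintype.card m < Fintype.card n) :
    ∃ v : n → K, v ≠ 0 ∧ A *ᵥ v = 0 := by
  have hker : LinearMap.ker A.mulVecLin ≠ ⊥ :=
    LinearMap.ker_ne_bot_of_finrank_lt (by simpa using h)
  obtain ⟨v, hv, hv0⟩ := (Submodule.ne_bot_iff _).mp hker
  exact ⟨v, hv0, hv⟩

section IteratedDeriv

variable {𝕜 ι : Type*} [NontriviallyNormedField 𝕜] [Fintype ι] {g : ι → 𝕜 → 𝕜} {x : 𝕜}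

theorem iteratedDeriv_sum_const_mul {n : ℕ} (hg : ∀ j, ContDiffAt 𝕜 n (g j) x) (c : ι → 𝕜) :
    iteratedDeriv n (fun z => ∑ j, c j * g j z) x = ∑ j, c j * iteratedDeriv n (g j) x := by
  simp only [iteratedDeriv_eq_iteratedFDeriv]
  rw [iteratedFDeriv_fun_sum_apply fun j _ => contDiffAt_const.mul (hg j)]
  simp only [_root_.sum_apply, ← iteratedDeriv_eq_iteratedFDeriv]
  exact Finset.sum_congr rfl fun j _ => iteratedDeriv_const_mul (c j) (hg j)

/-- Since every `g j` vanishes at `x`, the `l + 1` conditions on `c` reduce to the `l`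
linear equations given by the derivatives of orders `1, …, l`. -/
theorem exists_ne_zero_iteratedDeriv_sum_const_mul_eq_zero {l : ℕ}
    (hg : ∀ j, ContDiffAt 𝕜 l (g j) x) (hg0 : ∀ j, g j x = 0) (hl : l < Fintype.card ι) :
    ∃ c : ι → 𝕜, c ≠ 0 ∧
      ∀ m ≤ l, iteratedDeriv m (fun z => ∑ j, c j * g j z) x = 0 := by
  let A : Matrix (Fin l) ι 𝕜 := fun i j => iteratedDeriv (i + 1) (g j) x
  obtain ⟨c, hc0, hAc⟩ := A.exists_mulVec_eq_zero_of_card_lt (by simpa using hl)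
  refine ⟨c, hc0, fun m hm => ?_⟩
  rw [iteratedDeriv_sum_const_mul (fun j => (hg j).of_le (by exact_mod_cast hm))]
  cases m with
  | zero => simp [hg0]
  | succ k =>
    have hrow := congrFun hAc ⟨k, hm⟩
    simpa [A, Matrix.mulVec, dotProduct, mul_comm] using hrow

end IteratedDeriv

theorem exists_lambda_higher_vanishing_general (D : Set ℂ) (hDopen : IsOpen D)
    (f : ℂ → ℂ)
    (z₀ : ℂ) (hz₀ : z₀ ∈ D) (l : ℕ)
    (N : ℕ) (hNl : l < N)
    (zs : Fin N → ℂ) (hzs₀ : ∀ j, zs j ≠ z₀)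
    (g : Fin N → ℂ → ℂ) (hg : ∀ j, DifferentiableOn ℂ (g j) D)
    (hgeq : ∀ j, ∀ z ∈ D, z ≠ zs j → g j z = (f z - f (zs j)) * (z - z₀) / (z - zs j)) :
    ∃ lam : Fin N → ℂ, lam ≠ 0 ∧
      ∀ m : ℕ, m ≤ l → iteratedDeriv m (fun z => ∑ j : Fin N, lam j * g j z) z₀ = 0 := by
  have hg_smooth : ∀ j, ContDiffAt ℂ l (g j) z₀ := fun j =>
    ((hg j).contDiffOn hDopen).contDiffAt (hDopen.mem_nhds hz₀)
  have hg_zero : ∀ j, g j z₀ = 0 := fun j => by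
    simp [hgeq j z₀ hz₀ (hzs₀ j).symm]
  exact exists_ne_zero_iteratedDeriv_sum_const_mul_eq_zero hg_smooth hg_zero (by simpa using hNl)

/-- Key step of Case III in the proof of the main theorem: let `f` be holomorphic on
the domain `D`, not the restriction of a rational function, vanishing at `z₀ ∈ D` to
order exactly `l` (i.e. `f(z) = (z−z₀)^l h(z)` near `z₀` with `h` holomorphic,
`h(z₀) ≠ 0`).  For `N > l` pairwise distinct points `z₁, …, z_N ∈ D \ {z₀}` and
`g_j(z) = (f(z) − f(z_j))(z − z₀)/(z − z_j)` (extended across the removable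
singularity at `z_j`), there is `λ ≠ 0` such that `g_λ = Σ λ_j g_j` vanishes at `z₀`
to order at least `l + 1`, i.e. its first `l + 1` Taylor coefficients at `z₀`
vanish. -/
theorem exists_lambda_higher_vanishing (D : Set ℂ) (hDopen : IsOpen D)
    (hDconn : IsConnected D)
    (f : ℂ → ℂ) (hf : DifferentiableOn ℂ f D) (hfrat : ¬ IsRationalRestriction D f)
    (z₀ : ℂ) (hz₀ : z₀ ∈ D) (l : ℕ)
    (h : ℂ → ℂ) (ε : ℝ) (hε : 0 < ε) (hball : Metric.ball z₀ ε ⊆ D)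
    (hh : DifferentiableOn ℂ h (Metric.ball z₀ ε))
    (hfact : ∀ z ∈ Metric.ball z₀ ε, f z = (z - z₀) ^ l * h z)
    (hh0 : h z₀ ≠ 0)
    (N : ℕ) (hNl : l < N)
    (zs : Fin N → ℂ) (hzsD : ∀ j, zs j ∈ D) (hzs₀ : ∀ j, zs j ≠ z₀)
    (hinj : Function.Injective zs)
    (g : Fin N → ℂ → ℂ) (hg : ∀ j, DifferentiableOn ℂ (g j) D)
    (hgeq : ∀ j, ∀ z ∈ D, z ≠ zs j → g j z = (f z - f (zs j)) * (z - z₀) / (z - zs j)) :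
    ∃ lam : Fin N → ℂ, lam ≠ 0 ∧
      ∀ m : ℕ, m ≤ l → iteratedDeriv m (fun z => ∑ j : Fin N, lam j * g j z) z₀ = 0 :=
  exists_lambda_higher_vanishing_general D hDopen f z₀ hz₀ l N hNl zs hzs₀ g hg hgeq
end

section
/- Let k ∈ ℤ and let p, q be complex polynomials with q ≠ 0. Then ∫_{ℂ \ q⁻¹(0)} |p(z)/q(z)|² (1+|z|²)^{-(k+2)} dλ(z) < ∞ if and only if there exists a complex polynomial P with deg P ≤ k and p = P·q. In particular, a rational function lies in the weighted L² space over all of ℂ with weight (1+|z|²)^{-(k+2)} exactly when it is a polynomial of degree at most k. -/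
/-!
Write `F = ‖p / q‖² w_k`. Near a zero `a` of `q` at which `p` vanishes to lower order,
`‖p / q‖ ≍ ‖z - a‖ ^ (-j)` with `j ≥ 1`, and `‖z - a‖ ^ (-2)` is not integrable near `a` in real
dimension two; hence `q ∣ p`. For `p = P q` with `P ≠ 0`, the function `F = ‖P‖² w_k` is continuous
and `F ≍ ‖z‖ ^ (2 (deg P - k - 2))` at infinity, which is integrable there exactly when
`2 (deg P - k - 2) < -2`, i.e. `deg P ≤ k`. Both integrability tests come from integration in polar
coordinates.
-/

open MeasureTheory

open Filter Topology Asymptotics Metric Module Set Bornology Polynomial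

theorem pow_pred_mul_rpow {y : ℝ} (hy : 0 < y) {n : ℕ} (hn : 0 < n) (s : ℝ) :
    y ^ (n - 1) * y ^ s = y ^ (s + n - 1) := by
  rw [← Real.rpow_natCast, ← Real.rpow_add hy, Nat.cast_sub hn]
  ring_nf

section Radial

variable {E : Type*} [NormedAddCommGroup E] [NormedSpace ℝ E] [FiniteDimensional ℝ E]
  [MeasurableSpace E] [BorelSpace E] [Nontrivial E] (μ : Measure E) [μ.IsAddHaarMeasure]

theorem integrableOn_norm_sub_rpow_ball_iff (a : E) {r s : ℝ} (hr : 0 < r) :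
    IntegrableOn (fun x => ‖x - a‖ ^ s) (ball a r) μ ↔ -(finrank ℝ E : ℝ) < s := by
  have hn : 0 < finrank ℝ E := finrank_pos
  have hpre : (fun x => x - a) ⁻¹' ball (0 : E) r = ball a r := by
    ext x; simp [dist_eq_norm]
  have htr := (measurePreserving_sub_right μ a).integrableOn_comp_preimage
    (measurableEmbedding_subRight a) (f := fun x => ‖x‖ ^ s) (s := ball 0 r)
  rw [hpre, Function.comp_def] at htr
  rw [htr, integrableOn_fun_norm_addHaar μ (f := fun y => y ^ s)]
  simp only [smul_eq_mul]
  rw [integrableOn_congr_fun (fun y hy => pow_pred_mul_rpow hy.1 hn s) measurableSet_Ioo,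
    intervalIntegral.integrableOn_Ioo_rpow_iff hr]
  constructor <;> intro h <;> linarith

theorem integrableOn_norm_rpow_compl_closedBall_iff {r s : ℝ} (hr : 0 < r) :
    IntegrableOn (fun x => ‖x‖ ^ s) (closedBall (0 : E) r)ᶜ μ ↔ s < -(finrank ℝ E : ℝ) := by
  have hn : 0 < finrank ℝ E := finrank_pos
  have hind : (closedBall (0 : E) r)ᶜ.indicator (fun x => ‖x‖ ^ s) =
      fun x => (Ioi r).indicator (fun y => y ^ s) ‖x‖ := by
    ext x; simp [indicator]
  rw [← integrable_indicator_iff measurableSet_closedBall.compl, hind,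
    integrable_fun_norm_addHaar μ, ← indicator_smul, integrableOn_indicator_iff measurableSet_Ioi,
    Ioi_inter_Ioi, max_eq_left hr.le]
  simp only [smul_eq_mul]
  rw [integrableOn_congr_fun (s := Ioi r)
      (fun y (hy : r < y) => pow_pred_mul_rpow (hr.trans hy) hn s) measurableSet_Ioi,
    integrableOn_Ioi_rpow_iff hr]
  constructor <;> intro h <;> linarith

theorem integrableAtFilter_norm_sub_rpow_nhdsNE_iff (a : E) {s : ℝ} :
    IntegrableAtFilter (fun x => ‖x - a‖ ^ s) (𝓝[≠] a) μ ↔ -(finrank ℝ E : ℝ) < s := by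
  refine ⟨fun ⟨t, ht, hint⟩ => ?_, fun h => ?_⟩
  · obtain ⟨r, hr, hsub⟩ := Metric.mem_nhdsWithin_iff.1 ht
    rw [← integrableOn_norm_sub_rpow_ball_iff μ a hr]
    exact (hint.mono_set hsub).congr_set_ae (sdiff_null_ae_eq_self (measure_singleton a)).symm
  · exact ⟨ball a 1, mem_nhdsWithin_of_mem_nhds (ball_mem_nhds a one_pos),
      (integrableOn_norm_sub_rpow_ball_iff μ a one_pos).2 h⟩

theorem integrableAtFilter_norm_rpow_cobounded_iff {s : ℝ} :
    IntegrableAtFilter (fun x => ‖x‖ ^ s) (cobounded E) μ ↔ s < -(finrank ℝ E : ℝ) := by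
  have hbasis := hasBasis_cobounded_compl_closedBall (0 : E)
  refine ⟨fun ⟨t, ht, hint⟩ => ?_, fun h => ?_⟩
  · obtain ⟨r, -, hsub⟩ := hbasis.mem_iff.1 ht
    rw [← integrableOn_norm_rpow_compl_closedBall_iff μ (lt_max_of_lt_right one_pos)]
    exact hint.mono_set
      ((compl_subset_compl.2 (closedBall_subset_closedBall (le_max_left r 1))).trans hsub)
  · exact ⟨_, hbasis.mem_of_mem (i := 1) trivial,
      (integrableOn_norm_rpow_compl_closedBall_iff μ one_pos).2 h⟩

end Radial

theorem Asymptotics.IsTheta.integrableAtFilter_iff {α E F : Type*} [MeasurableSpace α]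
    [NormedAddCommGroup E] [NormedAddCommGroup F] {f : α → E} {g : α → F} {l : Filter α}
    {μ : Measure α} [l.IsMeasurablyGenerated] (h : f =Θ[l] g)
    (hf : StronglyMeasurableAtFilter f l μ) (hg : StronglyMeasurableAtFilter g l μ) :
    IntegrableAtFilter f l μ ↔ IntegrableAtFilter g l μ :=
  ⟨h.isBigO_symm.integrableAtFilter hg, h.isBigO.integrableAtFilter hf⟩

theorem Filter.Tendsto.isTheta_one {α E 𝕜 : Type*} [NormedAddCommGroup E] [NormedField 𝕜]
    {f : α → E} {l : Filter α} {c : E} (h : Tendsto f l (𝓝 c)) (hc : c ≠ 0) :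
    f =Θ[l] fun _ => (1 : 𝕜) :=
  ((isEquivalent_const_iff_tendsto hc).2 h).isTheta.trans (isTheta_const_const hc one_ne_zero)

namespace Polynomial

theorem forall_coeff_eq_zero_of_lt_iff {R : Type*} [Semiring R] {P : R[X]} (hP : P ≠ 0)
    (k : ℤ) : (∀ n : ℕ, k < n → P.coeff n = 0) ↔ (P.natDegree : ℤ) ≤ k := by
  refine ⟨fun h => not_lt.1 fun hk => leadingCoeff_ne_zero.2 hP (h _ hk), fun h n hn => ?_⟩
  exact coeff_eq_zero_of_natDegree_lt (by omega)

theorem dvd_of_forall_rootMultiplicity_le {K : Type*} [Field K] [IsAlgClosed K] {p q : K[X]}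
    (hp : p ≠ 0) (hq : q ≠ 0) (h : ∀ a, q.rootMultiplicity a ≤ p.rootMultiplicity a) :
    q ∣ p := by
  classical
  rw [IsAlgClosed.dvd_iff_roots_le_roots hq hp, Multiset.le_iff_count]
  simpa only [count_roots] using h

variable {𝕜 : Type*} [NormedField 𝕜]

theorem norm_eval_isTheta_cobounded {P : 𝕜[X]} (hP : P ≠ 0) :
    (fun z => ‖P.eval z‖) =Θ[cobounded 𝕜] fun z => ‖z‖ ^ P.natDegree := by
  have h := isEquivalent_cobounded_leading_monomial (P := P) |>.isTheta
  rw [isTheta_const_mul_right (leadingCoeff_ne_zero.2 hP)] at h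
  simpa only [norm_pow] using h.norm_left.norm_right

theorem div_isTheta_nhdsNE {p q : 𝕜[X]} (hp : p ≠ 0) (hq : q ≠ 0) (a : 𝕜) :
    (fun z => p.eval z / q.eval z) =Θ[𝓝[≠] a]
      fun z => (z - a) ^ ((p.rootMultiplicity a : ℤ) - q.rootMultiplicity a) := by
  obtain ⟨p₁, hp₁, hpa⟩ := p.exists_eq_pow_rootMultiplicity_mul_and_not_dvd hp a
  obtain ⟨q₁, hq₁, hqa⟩ := q.exists_eq_pow_rootMultiplicity_mul_and_not_dvd hq a
  rw [dvd_iff_isRoot] at hpa hqa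
  have hlim : Tendsto (fun z => p₁.eval z / q₁.eval z) (𝓝[≠] a) (𝓝 (p₁.eval a / q₁.eval a)) :=
    (p₁.continuousAt.div q₁.continuousAt hqa).mono_left nhdsWithin_le_nhds
  have heq : (fun z => p.eval z / q.eval z) =ᶠ[𝓝[≠] a] fun z => p₁.eval z / q₁.eval z *
      (z - a) ^ ((p.rootMultiplicity a : ℤ) - q.rootMultiplicity a) := by
    filter_upwards [self_mem_nhdsWithin,
      (q₁.continuousAt.eventually_ne hqa).filter_mono nhdsWithin_le_nhds] with z hz hq₁z
    rw [zpow_sub₀ (sub_ne_zero.2 hz), zpow_natCast, zpow_natCast]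
    conv_lhs => rw [hp₁, hq₁]
    simp only [eval_mul, eval_pow, eval_sub, eval_X, eval_C]
    field_simp
  simpa only [one_mul] using
    heq.trans_isTheta ((hlim.isTheta_one (div_ne_zero hpa hqa)).mul (isTheta_refl _ _))

end Polynomial

theorem fsWeight_pos (k : ℤ) (z : ℂ) : 0 < fsWeight k z :=
  zpow_pos (by positivity) _

@[fun_prop]
theorem continuous_fsWeight (k : ℤ) : Continuous (fsWeight k) :=
  (by fun_prop : Continuous fun z : ℂ => 1 + ‖z‖ ^ 2).zpow₀ _ fun _ => Or.inl (by positivity)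

theorem fsWeight_isTheta_cobounded (k : ℤ) :
    fsWeight k =Θ[cobounded ℂ] fun z => ‖z‖ ^ (-2 * (k + 2)) := by
  have h : (fun z : ℂ => 1 + ‖z‖ ^ 2) ~[cobounded ℂ] fun z => ‖z‖ ^ 2 :=
    IsEquivalent.refl.const_add_of_norm_tendsto_atTop <| tendsto_norm_atTop_atTop.comp <|
      (tendsto_pow_atTop two_ne_zero).comp tendsto_norm_cobounded_atTop
  refine (h.zpow (-(k + 2))).isTheta.trans_eventuallyEq (.of_eq ?_)
  ext z
  simp only [Pi.pow_apply]
  rw [← zpow_natCast, ← zpow_mul]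
  ring_nf

theorem norm_sq_eval_mul_fsWeight_isTheta_cobounded {P : ℂ[X]} (hP : P ≠ 0) (k : ℤ) :
    (fun z => ‖P.eval z‖ ^ 2 * fsWeight k z) =Θ[cobounded ℂ]
      fun z => ‖z‖ ^ (2 * ((P.natDegree : ℤ) - k - 2)) := by
  refine (((norm_eval_isTheta_cobounded hP).pow 2).mul
    (fsWeight_isTheta_cobounded k)).trans_eventuallyEq ?_
  filter_upwards [eventually_ne_cobounded 0] with z hz
  rw [← pow_mul, ← zpow_natCast, ← zpow_add₀ (norm_ne_zero_iff.2 hz)]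
  congr 1
  push_cast
  ring

theorem integrableAtFilter_norm_sq_eval_mul_fsWeight_cobounded_iff (P : ℂ[X]) (k : ℤ) :
    IntegrableAtFilter (fun z => ‖P.eval z‖ ^ 2 * fsWeight k z) (cobounded ℂ) ↔
      ∀ n : ℕ, k < n → P.coeff n = 0 := by
  rcases eq_or_ne P 0 with rfl | hP
  · exact iff_of_true ⟨univ, univ_mem, by simp⟩ fun _ _ => coeff_zero _
  have : (cobounded ℂ).IsMeasurablyGenerated := cobounded_eq_cocompact (α := ℂ) ▸ inferInstance
  have hrad := integrableAtFilter_norm_rpow_cobounded_iff (volume : Measure ℂ)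
    (s := ((2 * ((P.natDegree : ℤ) - k - 2) : ℤ) : ℝ))
  simp only [Real.rpow_intCast, Complex.finrank_real_complex] at hrad
  rw [P.forall_coeff_eq_zero_of_lt_iff hP,
    (norm_sq_eval_mul_fsWeight_isTheta_cobounded hP k).integrableAtFilter_iff
      (by fun_prop : Measurable _).aestronglyMeasurable.stronglyMeasurableAtFilter
      (by fun_prop : Measurable _).aestronglyMeasurable.stronglyMeasurableAtFilter, hrad]
  norm_cast
  omega

theorem not_integrableAtFilter_nhdsNE_of_rootMultiplicity_lt (k : ℤ) {p q : ℂ[X]} (hp : p ≠ 0)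
    (hq : q ≠ 0) {a : ℂ} (h : p.rootMultiplicity a < q.rootMultiplicity a) :
    ¬ IntegrableAtFilter (fun z => ‖p.eval z / q.eval z‖ ^ 2 * fsWeight k z) (𝓝[≠] a) := by
  have : (𝓝[≠] a).IsMeasurablyGenerated :=
    (measurableSet_singleton a).compl.nhdsWithin_isMeasurablyGenerated a
  set j : ℤ := p.rootMultiplicity a - q.rootMultiplicity a
  have hw : fsWeight k =Θ[𝓝[≠] a] fun _ => (1 : ℝ) :=
    ((continuous_fsWeight k).continuousAt.mono_left nhdsWithin_le_nhds).isTheta_one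
      (fsWeight_pos k a).ne'
  have hΘ : (fun z => ‖p.eval z / q.eval z‖ ^ 2 * fsWeight k z) =Θ[𝓝[≠] a]
      fun z => ‖z - a‖ ^ (2 * j) := by
    refine ((((div_isTheta_nhdsNE hp hq a).norm_left.norm_right).pow 2).mul hw).trans_eventuallyEq
      (.of_eq ?_)
    ext z
    rw [norm_zpow, mul_one, ← zpow_natCast, ← zpow_mul, mul_comm]
    rfl
  have hrad := integrableAtFilter_norm_sub_rpow_nhdsNE_iff (volume : Measure ℂ) a
    (s := ((2 * j : ℤ) : ℝ))
  simp only [Real.rpow_intCast, Complex.finrank_real_complex] at hrad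
  rw [hΘ.integrableAtFilter_iff
      (by fun_prop : Measurable _).aestronglyMeasurable.stronglyMeasurableAtFilter
      (by fun_prop : Measurable _).aestronglyMeasurable.stronglyMeasurableAtFilter, hrad]
  norm_cast
  omega

theorem dvd_of_forall_integrableAtFilter_nhdsNE (k : ℤ) {p q : ℂ[X]} (hq : q ≠ 0)
    (h : ∀ a, IntegrableAtFilter (fun z => ‖p.eval z / q.eval z‖ ^ 2 * fsWeight k z) (𝓝[≠] a)) :
    q ∣ p := by
  rcases eq_or_ne p 0 with rfl | hp
  · exact dvd_zero q
  exact dvd_of_forall_rootMultiplicity_le hp hq fun a => not_lt.1 fun hlt =>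
    not_integrableAtFilter_nhdsNE_of_rootMultiplicity_lt k hp hq hlt (h a)

theorem integrable_norm_sq_eval_mul_fsWeight_iff (P : ℂ[X]) (k : ℤ) :
    Integrable (fun z => ‖P.eval z‖ ^ 2 * fsWeight k z) ↔ ∀ n : ℕ, k < n → P.coeff n = 0 := by
  rw [integrable_iff_integrableAtFilter_cocompact, ← cobounded_eq_cocompact,
    integrableAtFilter_norm_sq_eval_mul_fsWeight_cobounded_iff, and_iff_left]
  exact (by fun_prop : Continuous fun z => ‖P.eval z‖ ^ 2 * fsWeight k z).locallyIntegrable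

/-- A rational function `p/q` is square integrable over all of `ℂ` for the
Fubini–Study weight `w_k` if and only if it is a polynomial of degree at most `k`,
i.e. `p = P·q` for some polynomial `P` with `deg P ≤ k`. -/
theorem rational_L2_iff_polynomial_of_degree_le (k : ℤ) (p q : Polynomial ℂ) (hq : q ≠ 0) :
    (∫⁻ z in {z : ℂ | q.eval z ≠ 0},
        ENNReal.ofReal (‖p.eval z / q.eval z‖ ^ 2 * fsWeight k z)) < ⊤ ↔
      ∃ P : Polynomial ℂ, (∀ n : ℕ, k < (n : ℤ) → P.coeff n = 0) ∧ p = P * q := by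
  set S := {z : ℂ | q.eval z ≠ 0}
  have hS : S ∈ Filter.cofinite := eventually_cofinite_not_isRoot hq
  have hSm : MeasurableSet S := by measurability
  have hquot (P : ℂ[X]) : EqOn (fun z => ‖(P * q).eval z / q.eval z‖ ^ 2 * fsWeight k z)
      (fun z => ‖P.eval z‖ ^ 2 * fsWeight k z) S := fun z hz => by
    simp only [eval_mul, mul_div_cancel_right₀ _ hz]
  rw [lt_top_iff_ne_top, lintegral_ofReal_ne_top_iff_integrable
    (by fun_prop : Measurable _).aestronglyMeasurable
    (ae_of_all _ fun z => by have := fsWeight_pos k z; positivity), ← IntegrableOn]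
  constructor
  · intro hF
    obtain ⟨P, rfl⟩ := dvd_iff_exists_eq_mul_left.1 <|
      dvd_of_forall_integrableAtFilter_nhdsNE k hq fun a => ⟨S, nhdsNE_le_cofinite a hS, hF⟩
    refine ⟨P, ?_, rfl⟩
    rw [← integrableAtFilter_norm_sq_eval_mul_fsWeight_cobounded_iff]
    exact ⟨S, le_cofinite _ hS, hF.congr_fun (hquot P) hSm⟩
  · rintro ⟨P, hP, rfl⟩
    exact ((integrable_norm_sq_eval_mul_fsWeight_iff P k).2 hP).integrableOn.congr_fun
      (hquot P).symm hSm
end
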